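/- arXiv:1908.05268 — 8 statements merged into one kernel-verified Lean document; each statement's English description precedes it below -/
import Mathlib

section
/- Let G be a finite graph and u,v adjacent vertices such that the multiset of distances from u to all vertices equals the multiset of distances from v to all vertices. Then the multiset {dist(u,w) : w ∈ V(G), dist(u,w) < dist(v,w)} equals the multiset {dist(v,w) : w ∈ V(G), dist(v,w) < dist(u,w)}. -/
open SimpleGraph
open scoped Classical

private lemma key_aux (a b : Multiset ℕ)
    (h : a + b.map (· + 1) = b + a.map (· + 1)) : a = b := by
  ext n
  induction n with
  | zero =>
    have h0 := congrArg (Multiset.count 0) h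
    have hz : ∀ (s : Multiset ℕ), Multiset.count 0 (s.map (· + 1)) = 0 := by
      intro s
      rw [Multiset.count_eq_zero]
      simp
    simpa [Multiset.count_add, hz] using h0
  | succ k ih =>
    have h1 := congrArg (Multiset.count (k + 1)) h
    have hc : ∀ (s : Multiset ℕ),
        Multiset.count (k + 1) (s.map (· + 1)) = Multiset.count k s := by
      intro s
      exact Multiset.count_map_eq_count' _ s (fun x y => by simp) k
    simp only [Multiset.count_add, hc] at h1
    omega

theorem stmt0 {V : Type*} [Fintype V] (G : SimpleGraph V) (hconn : G.Connected)
    (u v : V) (huv : G.Adj u v)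
    (hD : Finset.univ.val.map (G.dist u) = Finset.univ.val.map (G.dist v)) :
    (Finset.univ.filter (fun w => G.dist u w < G.dist v w)).val.map (G.dist u) =
    (Finset.univ.filter (fun w => G.dist v w < G.dist u w)).val.map (G.dist v) := by
  set du := G.dist u with hdu
  set dv := G.dist v with hdv
  have hd1 : G.dist u v = 1 := SimpleGraph.dist_eq_one_iff_adj.mpr huv
  have hd1' : G.dist v u = 1 := by rw [SimpleGraph.dist_comm]; exact hd1
  have htri1 : ∀ w, du w ≤ dv w + 1 := fun w => by
    have := hconn.dist_triangle (u := u) (v := v) (w := w)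
    rw [hd1] at this
    simp only [← hdu, ← hdv] at this
    omega
  have htri2 : ∀ w, dv w ≤ du w + 1 := fun w => by
    have := hconn.dist_triangle (u := v) (v := u) (w := w)
    rw [hd1'] at this
    simp only [← hdu, ← hdv] at this
    omega
  set p : V → Prop := fun w => du w < dv w with hp
  set q : V → Prop := fun w => dv w < du w with hq
  set s : Multiset V := (Finset.univ : Finset V).val with hs
  -- split s
  have hsplit : s = s.filter p + (s.filter q +
      s.filter (fun w => ¬ p w ∧ ¬ q w)) := by
    have h1 := Multiset.filter_add_not p s
    have h2 := Multiset.filter_add_not q (s.filter (fun w => ¬ p w))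
    rw [Multiset.filter_filter, Multiset.filter_filter] at h2
    have e1 : Multiset.filter (fun a => q a ∧ ¬ p a) s = Multiset.filter q s := by
      apply Multiset.filter_congr
      intro w _
      simp only [hp, hq]
      omega
    rw [e1] at h2
    have e2 : Multiset.filter (fun a => ¬ q a ∧ ¬ p a) s
        = Multiset.filter (fun w => ¬ p w ∧ ¬ q w) s := by
      apply Multiset.filter_congr
      intro w _; tauto
    rw [e2] at h2
    conv_lhs => rw [← h1, ← h2]
  set a : Multiset ℕ := (s.filter p).map du with ha
  set b : Multiset ℕ := (s.filter q).map dv with hb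
  have hmapqu : (s.filter q).map du = b.map (· + 1) := by
    rw [hb, Multiset.map_map]
    apply Multiset.map_congr rfl
    intro w hw
    have hwq : q w := (Multiset.mem_filter.mp hw).2
    have := htri1 w
    simp only [Function.comp]
    simp only [hq] at hwq
    omega
  have hmappv : (s.filter p).map dv = a.map (· + 1) := by
    rw [ha, Multiset.map_map]
    apply Multiset.map_congr rfl
    intro w hw
    have hwp : p w := (Multiset.mem_filter.mp hw).2
    have := htri2 w
    simp only [Function.comp]
    simp only [hp] at hwp
    omega
  have hmapr : (s.filter (fun w => ¬ p w ∧ ¬ q w)).map du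
      = (s.filter (fun w => ¬ p w ∧ ¬ q w)).map dv := by
    apply Multiset.map_congr rfl
    intro w hw
    have hwr := (Multiset.mem_filter.mp hw).2
    simp only [hp, hq] at hwr
    omega
  have hD' : a + (b.map (· + 1) + (s.filter (fun w => ¬ p w ∧ ¬ q w)).map du)
      = a.map (· + 1) + (b + (s.filter (fun w => ¬ p w ∧ ¬ q w)).map du) := by
    have h1 : s.map du = a + (b.map (· + 1)
        + (s.filter (fun w => ¬ p w ∧ ¬ q w)).map du) := by
      conv_lhs => rw [hsplit]
      rw [Multiset.map_add, Multiset.map_add, hmapqu, ha]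
    have h2 : s.map dv = a.map (· + 1) + (b
        + (s.filter (fun w => ¬ p w ∧ ¬ q w)).map du) := by
      conv_lhs => rw [hsplit]
      rw [Multiset.map_add, Multiset.map_add, hmappv, hb, ← hmapr]
    rw [← h1, ← h2]
    exact hD
  have hab : a = b := by
    apply key_aux
    have := hD'
    -- rearrange: a + (X + c) = A + (b + c)  ⇒  a + X = b + A
    have h2 : a + b.map (· + 1) + (s.filter (fun w => ¬ p w ∧ ¬ q w)).map du
        = b + a.map (· + 1) + (s.filter (fun w => ¬ p w ∧ ¬ q w)).map du := by
      rw [add_assoc, this, add_assoc]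
      exact add_left_comm _ _ _
    exact add_right_cancel h2
  -- conclude
  have hfa : (Finset.univ.filter (fun w => du w < dv w)).val = s.filter p := by
    simp [hs, hp, Finset.filter_val]
  have hfb : (Finset.univ.filter (fun w => dv w < du w)).val = s.filter q := by
    simp [hs, hq, Finset.filter_val]
  rw [hfa, hfb, ← ha, ← hb, hab]
end

section
/- Let G be a finite connected graph with n vertices, let {w1,w2} be a 2-separator of G, let C be the vertex set of a connected component of G − {w1,w2} with |C| < n/2, and let v ∈ C, where D denotes the distance multiset. Then there is no neighbor u of v with D(u)=D(v), dist(u,w1) < dist(v,w1), and dist(u,w2) < dist(v,w2). -/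
open SimpleGraph
open scoped Classical

theorem stmt2 {V : Type*} [Fintype V] (G : SimpleGraph V) (hconn : G.Connected)
    (w1 w2 : V) (hne : w1 ≠ w2)
    (hsep : ¬ (G.induce {x | x ≠ w1 ∧ x ≠ w2}).Connected)
    (C : Set V) (hCne : C.Nonempty) (hw1C : w1 ∉ C) (hw2C : w2 ∉ C)
    (hCconn : (G.induce C).Connected)
    (hCclosed : ∀ x ∈ C, ∀ y, G.Adj x y → y ∈ C ∨ y = w1 ∨ y = w2)
    (hCsmall : 2 * C.ncard < Fintype.card V)
    (v : V) (hv : v ∈ C) :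
    ¬ ∃ u, G.Adj v u ∧
      Finset.univ.val.map (G.dist u) = Finset.univ.val.map (G.dist v) ∧
      G.dist u w1 < G.dist v w1 ∧ G.dist u w2 < G.dist v w2 := by
  rintro ⟨u, hadj, hmul, h1, h2⟩
  -- sums of distances are equal
  have hsum : ∑ x, G.dist u x = ∑ x, G.dist v x := congrArg Multiset.sum hmul
  have htri : ∀ a b c : V, G.dist a c ≤ G.dist a b + G.dist b c := fun a b c => hconn.dist_triangle
  have hdvu : G.dist v u = 1 := (SimpleGraph.dist_eq_one_iff_adj).2 hadj
  have hduv : G.dist u v = 1 := (SimpleGraph.dist_eq_one_iff_adj).2 hadj.symm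
  -- separation lemma: any walk from a point in C to a point outside C ∪ {w1,w2}
  -- passes through w1 or w2
  have hsepwalk : ∀ (a : V), a ∈ C → ∀ (b : V), b ∉ C → b ≠ w1 → b ≠ w2 →
      ∀ (p : G.Walk a b),
      G.dist a w1 + G.dist w1 b ≤ p.length ∨ G.dist a w2 + G.dist w2 b ≤ p.length := by
    have key : ∀ (a b : V) (p : G.Walk a b), a ∈ C → b ∉ C → b ≠ w1 → b ≠ w2 →
        G.dist a w1 + G.dist w1 b ≤ p.length ∨ G.dist a w2 + G.dist w2 b ≤ p.length := by
      intro a b p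
      induction p with
      | nil => intro ha hb _ _; exact absurd ha hb
      | @cons a a' b hadj' p ih =>
        intro ha hb hb1 hb2
        have hlen : (SimpleGraph.Walk.cons hadj' p).length = p.length + 1 :=
          SimpleGraph.Walk.length_cons hadj' p
        have haa' : G.dist a a' = 1 := (SimpleGraph.dist_eq_one_iff_adj).2 hadj'
        rcases hCclosed a ha a' hadj' with h' | h' | h'
        · rcases ih h' hb hb1 hb2 with h | h
          · left
            have := htri a a' w1
            omega
          · right
            have := htri a a' w2
            omega
        · left
          have ha1 : G.dist a w1 = 1 := by rw [← h']; exact haa'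
          have hpb : G.dist w1 b ≤ p.length := by rw [← h']; exact SimpleGraph.dist_le p
          omega
        · right
          have ha2 : G.dist a w2 = 1 := by rw [← h']; exact haa'
          have hpb : G.dist w2 b ≤ p.length := by rw [← h']; exact SimpleGraph.dist_le p
          omega
    exact fun a ha b hb hb1 hb2 p => key a b p ha hb hb1 hb2
  -- for every x outside C, dist u x + 1 ≤ dist v x
  have hout : ∀ x, x ∉ C → G.dist u x + 1 ≤ G.dist v x := by
    intro x hx
    by_cases hx1 : x = w1
    · subst hx1; omega
    by_cases hx2 : x = w2
    · subst hx2; omega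
    obtain ⟨p, hp⟩ := (hconn v x).exists_walk_length_eq_dist
    rcases hsepwalk v hv x hx hx1 hx2 p with h | h
    · have := htri u w1 x
      omega
    · have := htri u w2 x
      omega
  -- for every x, dist u x ≤ dist v x + 1
  have hall : ∀ x, G.dist u x ≤ G.dist v x + 1 := by
    intro x
    have := htri u v x
    omega
  -- counting
  set S : Finset V := Finset.univ.filter (· ∈ C) with hS
  have hScard : S.card = C.ncard := by
    rw [Set.ncard_eq_toFinset_card']
    congr 1
    ext x
    simp [hS]
  have hsplit : ∀ (f : V → ℕ), ∑ x, f x = ∑ x ∈ S, f x + ∑ x ∈ Sᶜ, f x := by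
    intro f
    rw [Finset.sum_add_sum_compl]
  have hA : ∑ x ∈ Sᶜ, (G.dist u x + 1) ≤ ∑ x ∈ Sᶜ, G.dist v x := by
    apply Finset.sum_le_sum
    intro x hx
    simp only [hS, Finset.mem_compl, Finset.mem_filter, Finset.mem_univ, true_and] at hx
    exact hout x hx
  have hB : ∑ x ∈ S, G.dist u x ≤ ∑ x ∈ S, (G.dist v x + 1) := by
    apply Finset.sum_le_sum
    intro x _
    exact hall x
  rw [Finset.sum_add_distrib, Finset.sum_const, smul_eq_mul, mul_one] at hA
  rw [Finset.sum_add_distrib, Finset.sum_const, smul_eq_mul, mul_one] at hB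
  have hcompl : Sᶜ.card = Fintype.card V - S.card := Finset.card_compl S
  have hcard : Fintype.card V = S.card + Sᶜ.card := by
    have := Finset.card_le_univ S
    omega
  have h1' := hsplit (G.dist u)
  have h2' := hsplit (G.dist v)
  omega
end

section
/- Let G be a finite connected 2-connected regular graph on n vertices with a 2-separator {w1,w2} such that every vertex v satisfies D(v) = D(w1), where D(v) is the distance multiset of v, and let C be a component of G − {w1,w2} with |C| ≤ (n−2)/2 satisfying C ⊆ N(w1) ∩ N(w2) whenever w1w2 ∈ E(G). Then w1w2 ∉ E(G). -/
open SimpleGraph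
open scoped Classical

lemma walk_cross {V : Type*} {G : SimpleGraph V} (P : V → Prop) :
    ∀ {a c : V}, G.Walk a c → ¬ P a → P c →
      ∃ u z, G.Adj u z ∧ ¬ P u ∧ P z := by
  intro a c w
  induction w with
  | nil => intro ha hc; exact absurd hc ha
  | @cons a b c h p ih =>
    intro ha hc
    by_cases hb : P b
    · exact ⟨a, b, h, ha, hb⟩
    · exact ih hb hc

theorem stmt3 {V : Type*} [Fintype V] (G : SimpleGraph V) (d : ℕ)
    (hconn : G.Connected)
    (hnocut : ∀ v : V, (G.induce {u | u ≠ v}).Connected)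
    (hreg : ∀ v : V, (G.neighborSet v).ncard = d)
    (w1 w2 : V) (hne : w1 ≠ w2)
    (hsep : ¬ (G.induce {x | x ≠ w1 ∧ x ≠ w2}).Connected)
    (hD : ∀ v : V, Finset.univ.val.map (G.dist v) = Finset.univ.val.map (G.dist w1))
    (C : Set V) (hCne : C.Nonempty) (hw1C : w1 ∉ C) (hw2C : w2 ∉ C)
    (hCconn : (G.induce C).Connected)
    (hCclosed : ∀ x ∈ C, ∀ y, G.Adj x y → y ∈ C ∨ y = w1 ∨ y = w2)
    (hCsmall : 2 * C.ncard ≤ Fintype.card V - 2)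
    (hCnbrs : G.Adj w1 w2 → C ⊆ G.neighborSet w1 ∩ G.neighborSet w2) :
    ¬ G.Adj w1 w2 := by
  intro h
  have hCN := hCnbrs h
  have hCpos : 1 ≤ C.ncard := (Set.ncard_pos (Set.toFinite C)).mpr hCne
  -- C ∪ {w2} ⊆ N(w1)
  have hsub1 : C ∪ {w2} ⊆ G.neighborSet w1 := by
    rintro y (hy | rfl)
    · exact (hCN hy).1
    · exact h
  have hsub2 : C ∪ {w1} ⊆ G.neighborSet w2 := by
    rintro y (hy | rfl)
    · exact (hCN hy).2
    · exact h.symm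
  have hcard1 : (C ∪ {w2}).ncard = C.ncard + 1 := by
    rw [Set.ncard_union_eq (by simpa using hw2C) (Set.toFinite _) (Set.toFinite _),
      Set.ncard_singleton]
  have hcard2 : (C ∪ {w1}).ncard = C.ncard + 1 := by
    rw [Set.ncard_union_eq (by simpa using hw1C) (Set.toFinite _) (Set.toFinite _),
      Set.ncard_singleton]
  have hd_ge : C.ncard + 1 ≤ d := by
    rw [← hreg w1, ← hcard1]
    exact Set.ncard_le_ncard hsub1 (Set.toFinite _)
  -- pick x ∈ C, bound d from above
  obtain ⟨x, hx⟩ := hCne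
  have hxsub : G.neighborSet x ⊆ (C \ {x}) ∪ {w1, w2} := by
    intro y hy
    have hadj : G.Adj x y := hy
    rcases hCclosed x hx y hadj with hyC | rfl | rfl
    · left
      exact ⟨hyC, fun hyx => G.irrefl (hyx ▸ hadj)⟩
    · right; left; rfl
    · right; right; rfl
  have hd_le : d ≤ C.ncard + 1 := by
    have h1 : (C \ {x}).ncard = C.ncard - 1 := by
      rw [Set.ncard_diff (by simpa using hx) (Set.toFinite _), Set.ncard_singleton]
    have h2 : ({w1, w2} : Set V).ncard = 2 := Set.ncard_pair hne
    calc d = (G.neighborSet x).ncard := (hreg x).symm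
      _ ≤ ((C \ {x}) ∪ {w1, w2}).ncard := Set.ncard_le_ncard hxsub (Set.toFinite _)
      _ ≤ (C \ {x}).ncard + ({w1, w2} : Set V).ncard := Set.ncard_union_le _ _
      _ = (C.ncard - 1) + 2 := by rw [h1, h2]
      _ = C.ncard + 1 := by omega
  have hdeq : d = C.ncard + 1 := le_antisymm hd_le hd_ge
  -- N(w1) = C ∪ {w2}, N(w2) = C ∪ {w1}
  have hN1 : C ∪ {w2} = G.neighborSet w1 := by
    apply Set.eq_of_subset_of_ncard_le hsub1 _ (Set.toFinite _)
    rw [hcard1, hreg w1, hdeq]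
  have hN2 : C ∪ {w1} = G.neighborSet w2 := by
    apply Set.eq_of_subset_of_ncard_le hsub2 _ (Set.toFinite _)
    rw [hcard2, hreg w2, hdeq]
  -- find b outside C ∪ {w1, w2}
  set P : V → Prop := fun v => v ∈ C ∨ v = w1 ∨ v = w2 with hP
  have hb : ∃ b, ¬ P b := by
    by_contra hall
    push_neg at hall
    have huniv : (Set.univ : Set V) ⊆ C ∪ {w1, w2} := by
      intro v _
      rcases hall v with hv | rfl | rfl
      · exact Or.inl hv
      · exact Or.inr (Or.inl rfl)
      · exact Or.inr (Or.inr rfl)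
    have hc : Fintype.card V ≤ (C ∪ {w1, w2}).ncard := by
      have h0 : Fintype.card V = (Set.univ : Set V).ncard := by
        rw [Set.ncard_univ, Nat.card_eq_fintype_card]
      rw [h0]
      exact Set.ncard_le_ncard huniv (Set.toFinite _)
    have hcu : (C ∪ {w1, w2}).ncard ≤ C.ncard + 2 := by
      calc (C ∪ {w1, w2}).ncard ≤ C.ncard + ({w1, w2} : Set V).ncard :=
            Set.ncard_union_le _ _
        _ = C.ncard + 2 := by rw [Set.ncard_pair hne]
    omega
  obtain ⟨b, hbP⟩ := hb
  -- walk from b to w1 must cross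
  obtain ⟨u, z, huz, hu, hz⟩ :=
    walk_cross P ((hconn b w1).some) hbP (Or.inr (Or.inl rfl))
  rcases hz with hzC | rfl | rfl
  · exact hu (hCclosed z hzC u huz.symm)
  · have hu' : u ∈ C ∪ {w2} := by rw [hN1]; exact huz.symm
    rcases hu' with h' | h'
    · exact hu (Or.inl h')
    · exact hu (Or.inr (Or.inr h'))
  · have hu' : u ∈ C ∪ {w1} := by rw [hN2]; exact huz.symm
    rcases hu' with h' | h'
    · exact hu (Or.inl h')
    · exact hu (Or.inr (Or.inl h'))
end

section
/- Let G be a finite 2-connected graph in which some vertex w belongs to a 2-separator. Then the closed neighborhood N[w] does not induce a complete graph in G. -/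
/-!
Let `w` be simplicial, i.e. `N(w)` a clique. Collapsing `w` onto one of its neighbours maps every
edge to an edge or a single vertex, since any two neighbours of `w` are adjacent. Hence deleting a
simplicial vertex never disconnects a graph. Applied to the connected graph `G - w'`, this shows
that `G - w - w'` is connected, so `{w, w'}` cannot be a separator.
-/

open SimpleGraph
open scoped Classical

namespace SimpleGraph

variable {V W : Type*} {G : SimpleGraph V}

theorem Reachable.lift {H : SimpleGraph W} (f : V → W)
    (hf : ∀ u v, G.Adj u v → H.Reachable (f u) (f v)) {u v : V} (h : G.Reachable u v) :
    H.Reachable (f u) (f v) := by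
  rw [reachable_iff_reflTransGen] at h ⊢
  exact h.lift' f fun a b hab => (reachable_iff_reflTransGen _ _).1 (hf a b hab)

theorem exists_adj_of_reachable_of_ne {u v : V} (h : G.Reachable u v) (hne : u ≠ v) :
    ∃ x, G.Adj u x := by
  obtain ⟨p⟩ := h
  exact ⟨_, p.adj_snd (Walk.not_nil_of_ne hne)⟩

theorem induce_reachable_of_adj_or_eq {s : Set V} {u v : s} (h : G.Adj u v ∨ u.1 = v.1) :
    (G.induce s).Reachable u v := by
  rcases h with hadj | heq
  · exact (induce_adj.2 hadj).reachable
  · rw [Subtype.ext heq]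

theorem IsClique.adj_or_eq {s : Set V} (h : G.IsClique s) {a b : V} (ha : a ∈ s) (hb : b ∈ s) :
    G.Adj a b ∨ a = b :=
  (em (a = b)).symm.imp_left (h ha hb)

theorem preconnected_induce_diff_singleton_of_isClique {s : Set V} {w : V}
    (hw : G.IsClique (G.neighborSet w)) (hs : (G.induce s).Preconnected) :
    (G.induce (s \ {w})).Preconnected := by
  by_cases hws : w ∈ s
  swap
  · rwa [Set.sdiff_singleton_eq_self hws]
  rintro ⟨x, hxs, hxw⟩ ⟨y, hys, hyw⟩
  obtain ⟨n, hn⟩ := exists_adj_of_reachable_of_ne (hs ⟨w, hws⟩ ⟨x, hxs⟩)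
    (fun h => hxw (congrArg Subtype.val h).symm)
  have hnw : n.1 ≠ w := fun h => G.loopless.irrefl w (h ▸ hn)
  let collapse : s → ↥(s \ {w}) := fun v => if h : v.1 = w then ⟨n, n.2, hnw⟩ else ⟨v, v.2, h⟩
  have hcollapse_of_ne {v : s} (hv : v.1 ≠ w) : (collapse v).1 = v.1 := by simp [collapse, hv]
  have hcollapse_adj {v : s} (hv : v.1 = w ∨ G.Adj w v) : G.Adj w (collapse v) := by
    by_cases h : v.1 = w
    · simpa [collapse, h] using hn
    · rw [hcollapse_of_ne h]; exact hv.resolve_left h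
  have hstep : ∀ u v : s, (G.induce s).Adj u v →
      (G.induce (s \ {w})).Reachable (collapse u) (collapse v) := by
    intro u v (huv : G.Adj u v)
    apply induce_reachable_of_adj_or_eq
    by_cases hu : u.1 = w
    · exact hw.adj_or_eq (hcollapse_adj (.inl hu)) (hcollapse_adj (.inr (hu ▸ huv)))
    by_cases hv : v.1 = w
    · exact hw.adj_or_eq (hcollapse_adj (.inr (hv ▸ huv.symm))) (hcollapse_adj (.inl hv))
    · rw [hcollapse_of_ne hu, hcollapse_of_ne hv]
      exact .inl huv
  have hx : collapse ⟨x, hxs⟩ = ⟨x, hxs, hxw⟩ := Subtype.ext (hcollapse_of_ne hxw)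
  have hy : collapse ⟨y, hys⟩ = ⟨y, hys, hyw⟩ := Subtype.ext (hcollapse_of_ne hyw)
  rw [← hx, ← hy]
  exact (hs ⟨x, hxs⟩ ⟨y, hys⟩).lift collapse hstep

end SimpleGraph

theorem stmt10_general {V : Type*} [Fintype V] (G : SimpleGraph V)
    (hcard : 3 ≤ Fintype.card V)
    (hnocut : ∀ v : V, (G.induce {u | u ≠ v}).Connected)
    (w w' : V)
    (hsep : ¬ (G.induce {x | x ≠ w ∧ x ≠ w'}).Connected) :
    ¬ ∀ x ∈ insert w (G.neighborSet w), ∀ y ∈ insert w (G.neighborSet w),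
        x ≠ y → G.Adj x y := by
  intro hclique
  have hsimplicial : G.IsClique (G.neighborSet w) :=
    IsClique.subset (Set.subset_insert _ _) hclique
  have hset : {x | x ≠ w ∧ x ≠ w'} = {u | u ≠ w'} \ {w} := by
    ext; simp [and_comm]
  obtain ⟨u, hu, huw⟩ := Finset.exists_mem_ne (s := Finset.univ.erase w')
    (by rw [Finset.card_erase_of_mem (Finset.mem_univ _), Finset.card_univ]; omega) w
  refine hsep ((connected_iff _).2 ⟨?_, ⟨⟨u, huw, Finset.ne_of_mem_erase hu⟩⟩⟩)
  rw [hset]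
  exact preconnected_induce_diff_singleton_of_isClique hsimplicial (hnocut w').preconnected

theorem stmt10 {V : Type*} [Fintype V] (G : SimpleGraph V) (hconn : G.Connected)
    (hcard : 3 ≤ Fintype.card V)
    (hnocut : ∀ v : V, (G.induce {u | u ≠ v}).Connected)
    (w w' : V) (hne : w ≠ w')
    (hsep : ¬ (G.induce {x | x ≠ w ∧ x ≠ w'}).Connected) :
    ¬ ∀ x ∈ insert w (G.neighborSet w), ∀ y ∈ insert w (G.neighborSet w),
        x ≠ y → G.Adj x y :=
  stmt10_general G hcard hnocut w w' hsep
end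

section
/- Let G be a graph, S ⊆ V(G), and define the graph G[[S]] on vertex set S with an edge between u,v ∈ S whenever there is a path in G from u to v all of whose internal vertices avoid S. If G is 2-connected and |S| ≥ 3, then G[[S]] is 2-connected. -/
open SimpleGraph
open scoped Classical

def shrink {V : Type*} (G : SimpleGraph V) (S : Set V) : SimpleGraph S :=
  SimpleGraph.fromRel (fun u v =>
    ∃ p : G.Walk u.val v.val, p.IsPath ∧
      ∀ x ∈ p.support, x ≠ u.val → x ≠ v.val → x ∉ S)

lemma shrink_key {V : Type*} (G : SimpleGraph V) (S : Set V) :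
    ∀ n : ℕ, ∀ (a b : V) (ha : a ∈ S) (hb : b ∈ S) (p : G.Walk a b), p.length ≤ n →
    ∃ q : (shrink G S).Walk ⟨a, ha⟩ ⟨b, hb⟩, ∀ x ∈ q.support, (x : V) ∈ p.support := by
  intro n
  induction n using Nat.strong_induction_on with
  | _ n ih =>
  intro a b ha hb p hlen
  by_cases hab : a = b
  · subst hab
    refine ⟨.nil, ?_⟩
    intro x hx
    simp only [SimpleGraph.Walk.support_nil, List.mem_singleton] at hx
    subst hx
    exact p.start_mem_support
  · set p' := p.bypass with hp'
    have hp'path : p'.IsPath := p.bypass_isPath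
    have hsub : ∀ x ∈ p'.support, x ∈ p.support := fun x hx => p.support_bypass_subset hx
    have hlen' : p'.length ≤ p.length := p.length_bypass_le
    by_cases hc : ∃ c ∈ p'.support, c ≠ a ∧ c ≠ b ∧ c ∈ S
    · obtain ⟨c, hcs, hca, hcb, hcS⟩ := hc
      set p₁ := p'.takeUntil c hcs with hp₁
      set p₂ := p'.dropUntil c hcs with hp₂
      have hsum : p₁.length + p₂.length = p'.length := by
        have := p'.take_spec hcs
        calc p₁.length + p₂.length = (p₁.append p₂).length := (Walk.length_append _ _).symm
        _ = p'.length := by rw [this]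
      have h1pos : 0 < p₁.length := by
        rcases Nat.eq_zero_or_pos p₁.length with h | h
        · exact (hca (Walk.eq_of_length_eq_zero h).symm).elim
        · exact h
      have h2pos : 0 < p₂.length := by
        rcases Nat.eq_zero_or_pos p₂.length with h | h
        · exact (hcb (Walk.eq_of_length_eq_zero h)).elim
        · exact h
      have h1lt : p₁.length < n := by omega
      have h2lt : p₂.length < n := by omega
      obtain ⟨q₁, hq₁⟩ := ih p₁.length h1lt a c ha hcS p₁ le_rfl
      obtain ⟨q₂, hq₂⟩ := ih p₂.length h2lt c b hcS hb p₂ le_rfl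
      refine ⟨q₁.append q₂, ?_⟩
      intro x hx
      rcases (Walk.mem_support_append_iff _ _).mp hx with h | h
      · exact hsub _ (p'.support_takeUntil_subset hcs (hq₁ x h))
      · exact hsub _ (p'.support_dropUntil_subset hcs (hq₂ x h))
    · push_neg at hc
      have hadj : (shrink G S).Adj ⟨a, ha⟩ ⟨b, hb⟩ := by
        rw [shrink, SimpleGraph.fromRel_adj]
        exact ⟨fun h => hab (congrArg Subtype.val h), Or.inl ⟨p', hp'path, hc⟩⟩
      refine ⟨hadj.toWalk, ?_⟩
      intro x hx
      simp only [Adj.toWalk, Walk.support_cons, Walk.support_nil, List.mem_cons,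
        List.mem_singleton, List.not_mem_nil, or_false] at hx
      rcases hx with h | h
      · subst h; exact p.start_mem_support
      · subst h; exact p.end_mem_support

lemma liftWalk {V : Type*} {H : SimpleGraph V} {T : Set V} :
    ∀ {a b : V} (q : H.Walk a b) (hq : ∀ x ∈ q.support, x ∈ T),
    (H.induce T).Reachable ⟨a, hq a q.start_mem_support⟩ ⟨b, hq b q.end_mem_support⟩ := by
  intro a b q
  induction q with
  | nil => intro hq; exact Reachable.refl _
  | @cons a m b h q ih =>
    intro hq
    have hm : ∀ x ∈ q.support, x ∈ T := fun x hx => hq x (by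
      simp only [Walk.support_cons, List.mem_cons]; right; exact hx)
    have h1 : (H.induce T).Adj ⟨a, hq a (Walk.start_mem_support _)⟩
        ⟨m, hm m q.start_mem_support⟩ := h
    exact (h1.reachable).trans (ih hm)

theorem stmt12 {V : Type*} [Fintype V] (G : SimpleGraph V) (hconn : G.Connected)
    (hcard : 3 ≤ Fintype.card V)
    (hnocut : ∀ v : V, (G.induce {u | u ≠ v}).Connected)
    (S : Set V) (hS : 3 ≤ S.ncard) :
    (shrink G S).Connected ∧
    ∀ w : S, ((shrink G S).induce {u | u ≠ w}).Connected := by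
  have hfin : S.Finite := S.toFinite
  have hne : S.Nonempty := by
    rw [← Set.ncard_pos hfin]; omega
  constructor
  · rw [connected_iff]
    refine ⟨fun u v => ?_, ⟨⟨hne.choose, hne.choose_spec⟩⟩⟩
    obtain ⟨p⟩ := hconn.preconnected u.val v.val
    obtain ⟨q, _⟩ := shrink_key G S p.length u.val v.val u.2 v.2 p le_rfl
    exact ⟨q⟩
  · intro w
    rw [connected_iff]
    constructor
    · rintro ⟨u, hu⟩ ⟨v, hv⟩
      have hu' : (u : V) ≠ (w : V) := fun h => hu (Subtype.ext h)
      have hv' : (v : V) ≠ (w : V) := fun h => hv (Subtype.ext h)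
      obtain ⟨p0⟩ := (hnocut w.val).preconnected ⟨u.val, hu'⟩ ⟨v.val, hv'⟩
      set p := p0.map (SimpleGraph.Embedding.induce {x : V | x ≠ (w : V)}).toHom with hp
      have hpsupp : ∀ x ∈ p.support, x ≠ (w : V) := by
        intro x hx
        rw [hp, Walk.support_map, List.mem_map] at hx
        obtain ⟨y, _, rfl⟩ := hx
        exact y.2
      obtain ⟨q, hq⟩ := shrink_key G S p.length u.val v.val u.2 v.2 p le_rfl
      have hqT : ∀ x ∈ q.support, x ∈ {u : S | u ≠ w} := by
        intro x hx
        exact fun h => hpsupp _ (hq x hx) (congrArg Subtype.val h)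
      exact liftWalk q hqT
    · obtain ⟨a, b, ha, hb, hab⟩ := Set.one_lt_ncard_iff hfin |>.mp (by omega)
      by_cases haw : a = (w : V)
      · exact ⟨⟨⟨b, hb⟩, fun h => hab (haw ▸ congrArg Subtype.val h ▸ rfl)⟩⟩
      · exact ⟨⟨⟨a, ha⟩, fun h => haw (congrArg Subtype.val h)⟩⟩
end

section
/- For every n ≥ 2, the graph G⁺_{n,n} obtained from the n×n grid by replacing every edge with a path of length 3 has treewidth at most n+2. Moreover, there is a tree decomposition (T,β) of width at most n+2 such that every bag contains at most one original grid vertex, and any bag containing a grid vertex v equals {v} ∪ {(v,w) : vw an edge of the grid} and is attached at a leaf of T. -/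
/-!
Number the cells of the grid row by row. The tree is a caterpillar: a spine path with two nodes
per cell `k` (an entry node and a hub), and for every cell a leaf, hung off its hub, whose bag is
the cell together with its outgoing arcs. An arc from cell `a` to a later cell `b` travels along
the spine from the hub of `a` to the entry of `b`, where it meets its reverse arc. Hence a spine
bag holds the downward arcs leaving the `n` cells just before it and at most three other arcs,
`n + 3` vertices in all. The spine and leaves form a tree because every node but the root has a
parent of smaller rank, and each parent edge separates the descendants of its child.
-/

open SimpleGraph
open scoped Classical

/-- The `n × n` grid graph: vertices at `L1`-distance `1` are adjacent. -/
def grid (n : ℕ) : SimpleGraph (Fin n × Fin n) :=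
  SimpleGraph.fromRel (fun a b =>
    (a.1 = b.1 ∧ a.2.val + 1 = b.2.val) ∨ (a.2 = b.2 ∧ a.1.val + 1 = b.1.val))

/-- Vertices of the subdivided grid `G⁺`: original grid vertices together with a
vertex `(v, w)` for every directed edge of the grid. -/
abbrev GridPlusVert (n : ℕ) :=
  (Fin n × Fin n) ⊕ {p : (Fin n × Fin n) × (Fin n × Fin n) // (grid n).Adj p.1 p.2}

/-- The grid where every edge `vw` is replaced by the path `v, (v,w), (w,v), w`. -/
def gridPlus (n : ℕ) : SimpleGraph (GridPlusVert n) :=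
  SimpleGraph.fromRel (fun x y =>
    match x, y with
    | Sum.inl v, Sum.inr p => v = p.val.1
    | Sum.inr p, Sum.inr q => p.val.1 = q.val.2 ∧ p.val.2 = q.val.1
    | _, _ => False)

/-- A tree decomposition of a graph `G` with bags indexed by `ι`. -/
structure TreeDecomp {V : Type*} (G : SimpleGraph V) (ι : Type*) where
  T : SimpleGraph ι
  tree : T.IsTree
  bag : ι → Set V
  bags_connected : ∀ v : V, (T.induce {i | v ∈ bag i}).Connected
  edge_subset : ∀ u v, G.Adj u v → ∃ i, u ∈ bag i ∧ v ∈ bag i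

namespace SimpleGraph

section ParentGraph

variable {α : Type*} (root : α) (parent : α → α)

def ParentStep (x y : α) : Prop := x ≠ root ∧ y = parent x

def parentGraph : SimpleGraph α := fromRel (ParentStep root parent)

variable {root parent} {rank : α → ℕ} (hrank : ∀ x, x ≠ root → rank (parent x) < rank x)
include hrank

theorem parentGraph_adj_parent {x : α} (hx : x ≠ root) :
    (parentGraph root parent).Adj x (parent x) :=
  (fromRel_adj ..).2 ⟨fun h => (hrank x hx).ne (congrArg rank h.symm), Or.inl ⟨hx, rfl⟩⟩

theorem parentGraph_induce_connected {S : Set α} {r : α} (hr : r ∈ S)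
    (hS : ∀ x ∈ S, x ≠ r → x ≠ root ∧ parent x ∈ S) :
    ((parentGraph root parent).induce S).Connected := by
  have reach : ∀ x (hx : x ∈ S),
      ((parentGraph root parent).induce S).Reachable ⟨r, hr⟩ ⟨x, hx⟩ := by
    intro x
    induction x using (measure rank).wf.induction with
    | _ x ih =>
      intro hx
      by_cases hxr : x = r
      · subst hxr; rfl
      obtain ⟨hroot, hpx⟩ := hS x hx hxr
      have hadj : ((parentGraph root parent).induce S).Adj ⟨parent x, hpx⟩ ⟨x, hx⟩ :=
        (parentGraph_adj_parent hrank hroot).symm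
      exact (ih _ (hrank x hroot) hpx).trans hadj.reachable
  have : Nonempty S := ⟨⟨r, hr⟩⟩
  exact ⟨fun x y => (reach x x.2).symm.trans (reach y y.2)⟩

theorem parentGraph_connected : (parentGraph root parent).Connected :=
  (induceUnivIso _).connected_iff.1 <|
    parentGraph_induce_connected hrank (Set.mem_univ root) fun _ _ h => ⟨h, Set.mem_univ _⟩

theorem rank_le_of_reflTransGen_parentStep {x y : α}
    (h : Relation.ReflTransGen (ParentStep root parent) x y) : rank y ≤ rank x := by
  induction h with
  | refl => rfl
  | tail _ hyz ih =>
    obtain ⟨hy, rfl⟩ := hyz; exact (hrank _ hy).le.trans ih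

theorem parentGraph_isAcyclic : (parentGraph root parent).IsAcyclic := by
  rw [isAcyclic_iff_forall_adj_isBridge]
  suffices h : ∀ x, x ≠ root → (parentGraph root parent).IsBridge s(x, parent x) by
    intro x y hxy
    rcases ((fromRel_adj _ _ _).1 hxy).2 with ⟨hx, rfl⟩ | ⟨hy, rfl⟩
    · exact h x hx
    · rw [Sym2.eq_swap]; exact h y hy
  intro x hx
  refine isBridge_iff.2 fun hreach => ?_
  -- the descendants of `x` are closed under every edge other than `s(x, parent x)`
  let D := {z | Relation.ReflTransGen (ParentStep root parent) z x}
  have hD : ∀ z w, ((parentGraph root parent).deleteEdges {s(x, parent x)}).Adj z w →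
      (z ∈ D ↔ w ∈ D) := by
    suffices ∀ z, z ≠ root → z ≠ x → (z ∈ D ↔ parent z ∈ D) by
      intro z w hzw
      obtain ⟨hadj, hne⟩ := (deleteEdges_adj ..).1 hzw
      rcases ((fromRel_adj ..).1 hadj).2 with ⟨hz, rfl⟩ | ⟨hw, rfl⟩
      · exact this z hz (by rintro rfl; exact hne rfl)
      · exact (this w hw (by rintro rfl; exact hne Sym2.eq_swap)).symm
    intro z hz hzx
    refine ⟨fun hzD => ?_, fun hpD => .head ⟨hz, rfl⟩ hpD⟩
    rcases Relation.ReflTransGen.cases_head hzD with rfl | ⟨w, ⟨-, rfl⟩, hw⟩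
    · exact absurd rfl hzx
    · exact hw
  have hpx : parent x ∈ D := by
    suffices ∀ y, ((parentGraph root parent).deleteEdges {s(x, parent x)}).Reachable x y →
        y ∈ D from this _ hreach
    intro y hy
    replace hy := (reachable_iff_reflTransGen _ _).1 hy
    induction hy with
    | refl => exact .refl
    | tail _ hzw ih => exact (hD _ _ hzw).1 ih
  exact absurd (rank_le_of_reflTransGen_parentStep hrank hpx) (not_le.2 (hrank x hx))

theorem parentGraph_isTree : (parentGraph root parent).IsTree :=
  ⟨parentGraph_connected hrank, parentGraph_isAcyclic hrank⟩

theorem parentGraph_existsUnique_adj_of_not_parent {x : α} (hx : x ≠ root)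
    (hleaf : ∀ y, y ≠ root → parent y ≠ x) : ∃! y, (parentGraph root parent).Adj x y := by
  refine ⟨parent x, parentGraph_adj_parent hrank hx, fun y hxy => ?_⟩
  rcases ((fromRel_adj ..).1 hxy).2 with ⟨-, rfl⟩ | ⟨hy, rfl⟩
  · rfl
  · exact absurd rfl (hleaf y hy)

end ParentGraph

end SimpleGraph

namespace GridPlus

variable {n : ℕ}

abbrev Arc (n : ℕ) := {p : (Fin n × Fin n) × (Fin n × Fin n) // (grid n).Adj p.1 p.2}

def cellIndex (v : Fin n × Fin n) : ℕ := finProdFinEquiv v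

theorem cellIndex_injective : Function.Injective (cellIndex (n := n)) :=
  Fin.val_injective.comp finProdFinEquiv.injective

theorem cellIndex_of_adj {v w : Fin n × Fin n} (h : (grid n).Adj v w) :
    cellIndex w = cellIndex v + 1 ∨ cellIndex w = cellIndex v + n ∨
      cellIndex v = cellIndex w + 1 ∨ cellIndex v = cellIndex w + n := by
  simp only [grid, fromRel_adj, cellIndex, finProdFinEquiv_apply_val] at h ⊢
  obtain ⟨-, (⟨h1, h2⟩ | ⟨h1, h2⟩) | (⟨h1, h2⟩ | ⟨h1, h2⟩)⟩ := h <;>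
    simp only [h1, ← h2, Nat.mul_succ] <;> omega

def arcEnds (p : Arc n) : ℕ × ℕ := (cellIndex p.val.1, cellIndex p.val.2)

theorem arcEnds_injective : Function.Injective (arcEnds (n := n)) := fun p q h => by
  simp only [arcEnds, Prod.mk.injEq] at h
  exact Subtype.ext (Prod.ext (cellIndex_injective h.1) (cellIndex_injective h.2))

theorem arcEnds_ne (p : Arc n) : cellIndex p.val.1 ≠ cellIndex p.val.2 :=
  fun h => p.2.ne (cellIndex_injective h)

theorem ncard_le_card_of_arcEnds_mem {s : Set (Arc n)} {F : Finset (ℕ × ℕ)}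
    (h : ∀ p ∈ s, arcEnds p ∈ F) : s.ncard ≤ F.card :=
  (Set.ncard_le_ncard_of_injOn arcEnds h arcEnds_injective.injOn F.finite_toSet).trans
    (Set.ncard_coe_finset F).le

/-- Spine node `2k` is the entry of cell `k` and spine node `2k + 1` is its hub. -/
def OnSpine (i a b : ℕ) : Prop :=
  (a < b ∧ 2 * a + 1 ≤ i ∧ i ≤ 2 * b) ∨ (b < a ∧ (i = 2 * a ∨ i = 2 * a + 1))

theorem onSpine_hub {a b : ℕ} (hab : a ≠ b) : OnSpine (2 * a + 1) a b := by
  unfold OnSpine; omega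

theorem onSpine_start {a b : ℕ} (hab : a ≠ b) :
    OnSpine (if a < b then 2 * a + 1 else 2 * a) a b := by
  unfold OnSpine; split_ifs <;> omega

theorem onSpine_pred {i a b : ℕ} (h : OnSpine i a b)
    (hi : i ≠ if a < b then 2 * a + 1 else 2 * a) : i ≠ 0 ∧ OnSpine (i - 1) a b := by
  unfold OnSpine at *; split_ifs at hi <;> omega

theorem onSpine_twin {a b : ℕ} (hab : a ≠ b) :
    OnSpine (2 * max a b) a b ∧ OnSpine (2 * max a b) b a := by
  unfold OnSpine; omega

/-- The downward arcs on spine node `i` start in `n` consecutive cells; each other arc on it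
is one of three. -/
def spineArcEnds (n i : ℕ) : Finset (ℕ × ℕ) :=
  ((Finset.Ico ((i + 1) / 2 - n) ((i + 1) / 2)).image fun c => (c, c + n)) ∪
    {((i - 1) / 2, (i - 1) / 2 + 1), (i / 2, i / 2 - 1), (i / 2, i / 2 - n)}

theorem card_spineArcEnds_le (n i : ℕ) : (spineArcEnds n i).card ≤ n + 3 := by
  refine (Finset.card_union_le _ _).trans (add_le_add ?_ Finset.card_le_three)
  refine Finset.card_image_le.trans ?_
  rw [Nat.card_Ico]
  omega

theorem mem_spineArcEnds {i a b : ℕ} (h : OnSpine i a b)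
    (hstep : b = a + 1 ∨ b = a + n ∨ a = b + 1 ∨ a = b + n) :
    (a, b) ∈ spineArcEnds n i := by
  unfold OnSpine at h
  simp only [spineArcEnds, Finset.mem_union, Finset.mem_image, Finset.mem_Ico,
    Finset.mem_insert, Finset.mem_singleton, Prod.mk.injEq]
  by_cases hdown : b = a + n ∧ a < b
  · exact Or.inl ⟨a, by omega, rfl, hdown.1.symm⟩
  · right; omega

/-- Tree nodes: the spine nodes, and one leaf for every cell. -/
abbrev Node (n : ℕ) := ℕ ⊕ (Fin n × Fin n)

def nodeParent : Node n → Node n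
  | .inl i => .inl (i - 1)
  | .inr v => .inl (2 * cellIndex v + 1)

def nodeRank : Node n → ℕ
  | .inl i => i
  | .inr v => 2 * cellIndex v + 2

theorem nodeRank_parent_lt : ∀ x : Node n, x ≠ .inl 0 → nodeRank (nodeParent x) < nodeRank x
  | .inl _, hi => Nat.sub_one_lt fun h => hi (congrArg _ h)
  | .inr _, _ => Nat.lt_succ_self _

def caterpillar (n : ℕ) : SimpleGraph (Node n) := parentGraph (.inl 0) nodeParent

theorem caterpillar_isTree : (caterpillar n).IsTree :=
  parentGraph_isTree nodeRank_parent_lt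

theorem caterpillar_existsUnique_adj_inr (v : Fin n × Fin n) :
    ∃! x, (caterpillar n).Adj (.inr v) x :=
  parentGraph_existsUnique_adj_of_not_parent nodeRank_parent_lt Sum.inr_ne_inl
    fun | .inl _, _ => Sum.inl_ne_inr | .inr _, _ => Sum.inl_ne_inr

def star (v : Fin n × Fin n) : Set (GridPlusVert n) :=
  {Sum.inl v} ∪ {x | ∃ p : Arc n, p.val.1 = v ∧ x = Sum.inr p}

def bag : Node n → Set (GridPlusVert n)
  | .inl i => Sum.inr '' {p | OnSpine i (cellIndex p.val.1) (cellIndex p.val.2)}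
  | .inr v => star v

theorem inl_mem_bag {v : Fin n × Fin n} {x : Node n} : Sum.inl v ∈ bag x ↔ x = .inr v := by
  rcases x with i | w <;> simp [bag, star, eq_comm]

theorem inr_mem_bag_inl {p : Arc n} {i : ℕ} :
    Sum.inr p ∈ bag (.inl i) ↔ OnSpine i (cellIndex p.val.1) (cellIndex p.val.2) := by
  simp [bag]

theorem inr_mem_bag_inr {p : Arc n} {v : Fin n × Fin n} :
    Sum.inr p ∈ bag (.inr v) ↔ p.val.1 = v := by
  simp only [bag, star, Set.mem_union, Set.mem_singleton_iff, reduceCtorEq, false_or,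
    Set.mem_ofPred_eq, Sum.inr.injEq, exists_eq_right']

theorem caterpillar_induce_bag_connected (x : GridPlusVert n) :
    ((caterpillar n).induce {j | x ∈ bag j}).Connected := by
  rcases x with v | p
  · refine parentGraph_induce_connected nodeRank_parent_lt (r := .inr v) (inl_mem_bag.2 rfl) ?_
    intro y hy hne
    exact absurd (inl_mem_bag.1 hy) hne
  · have hab := arcEnds_ne p
    refine parentGraph_induce_connected nodeRank_parent_lt (r := .inl _)
      (inr_mem_bag_inl.2 (onSpine_start hab)) ?_
    rintro (i | v) hy hne
    · obtain ⟨hi, hpred⟩ := onSpine_pred (inr_mem_bag_inl.1 hy) (fun h => hne (h ▸ rfl))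
      exact ⟨by simpa using hi, inr_mem_bag_inl.2 hpred⟩
    · obtain rfl := inr_mem_bag_inr.1 hy
      exact ⟨Sum.inr_ne_inl, inr_mem_bag_inl.2 (onSpine_hub hab)⟩

theorem exists_mem_bag_of_adj {x y : GridPlusVert n} (h : (gridPlus n).Adj x y) :
    ∃ j, x ∈ bag j ∧ y ∈ bag j := by
  rcases x with v | p <;> rcases y with w | q <;>
    simp only [gridPlus, fromRel_adj, ne_eq, Sum.inl.injEq, Sum.inr.injEq, reduceCtorEq, or_self,
      and_false, not_false_eq_true, or_false, false_or, true_and] at h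
  · subst h
    exact ⟨.inr _, inl_mem_bag.2 rfl, inr_mem_bag_inr.2 rfl⟩
  · subst h
    exact ⟨.inr _, inr_mem_bag_inr.2 rfl, inl_mem_bag.2 rfl⟩
  · obtain ⟨hq1, hq2⟩ : q.val.1 = p.val.2 ∧ q.val.2 = p.val.1 := by tauto
    obtain ⟨hp, hq⟩ := onSpine_twin (arcEnds_ne p)
    refine ⟨.inl _, inr_mem_bag_inl.2 hp, inr_mem_bag_inl.2 ?_⟩
    rwa [hq1, hq2]

theorem ncard_star_le (v : Fin n × Fin n) : (star v).ncard ≤ 5 := by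
  set a := cellIndex v
  have hout : {p : Arc n | p.val.1 = v}.ncard ≤ 4 := by
    refine (ncard_le_card_of_arcEnds_mem (F := {(a, a + 1), (a, a + n), (a, a - 1), (a, a - n)})
      ?_).trans Finset.card_le_four
    rintro p rfl
    have := cellIndex_of_adj p.2
    simp only [arcEnds, Finset.mem_insert, Finset.mem_singleton, Prod.mk.injEq, true_and, a]
    omega
  have hinr : {x : GridPlusVert n | ∃ p : Arc n, p.val.1 = v ∧ x = Sum.inr p} =
      Sum.inr '' {p | p.val.1 = v} := by
    ext x
    simp [eq_comm]
  calc (star v).ncard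
      ≤ ({Sum.inl v} : Set (GridPlusVert n)).ncard +
          (Sum.inr '' {p : Arc n | p.val.1 = v}).ncard := by
        rw [star, hinr]; exact Set.ncard_union_le _ _
    _ = 1 + {p : Arc n | p.val.1 = v}.ncard := by
        rw [Set.ncard_singleton, Set.ncard_image_of_injective _ Sum.inr_injective]
    _ ≤ 5 := by omega

theorem ncard_bag_le (hn : 2 ≤ n) : ∀ x : Node n, (bag x).ncard ≤ n + 3
  | .inl i => by
    rw [bag, Set.ncard_image_of_injective _ Sum.inr_injective]
    refine (ncard_le_card_of_arcEnds_mem fun p hp => ?_).trans (card_spineArcEnds_le n i)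
    exact mem_spineArcEnds hp (cellIndex_of_adj p.2)
  | .inr v => (ncard_star_le v).trans (by omega)

theorem ncard_inl_mem_bag_le_one (x : Node n) :
    ({y ∈ bag x | ∃ v, y = Sum.inl v}).ncard ≤ 1 := by
  refine (Set.ncard_le_one_iff (Set.toFinite _)).2 ?_
  rintro _ _ ⟨hv, v, rfl⟩ ⟨hw, w, rfl⟩
  rw [inl_mem_bag.1 hv, inl_mem_bag, Sum.inr.injEq] at hw
  rw [hw]

end GridPlus

theorem stmt14 (n : ℕ) (hn : 2 ≤ n) :
    ∃ (ι : Type) (td : TreeDecomp (gridPlus n) ι),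
      (∀ i, (td.bag i).ncard ≤ n + 3) ∧
      (∀ i, ({x ∈ td.bag i | ∃ v, x = Sum.inl v}).ncard ≤ 1) ∧
      (∀ i (v : Fin n × Fin n), Sum.inl v ∈ td.bag i →
        (td.bag i = {Sum.inl v} ∪
          {x | ∃ p : {p : (Fin n × Fin n) × (Fin n × Fin n) // (grid n).Adj p.1 p.2},
            p.val.1 = v ∧ x = Sum.inr p}) ∧
        (∃! j, td.T.Adj i j)) := by
  open GridPlus in
  refine ⟨Node n, ⟨caterpillar n, caterpillar_isTree, bag, caterpillar_induce_bag_connected,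
    fun _ _ => exists_mem_bag_of_adj⟩, ncard_bag_le hn, ncard_inl_mem_bag_le_one, ?_⟩
  intro i v hv
  obtain rfl := inl_mem_bag.1 hv
  exact ⟨rfl, caterpillar_existsUnique_adj_inr v⟩
end

section
/- For n ≥ 2, the Cai–Fürer–Immerman graphs CFI(G_{n,n}) and ~CFI(G_{n,n}) built over the n×n grid have treewidth at most 2n+5. -/
open SimpleGraph
open scoped Classical

/-- Pair vertices `a(v,w)` (Bool `false`) and `b(v,w)` (Bool `true`) of the CFI
construction, one pair for every directed edge `(v,w)` of `G`. -/
abbrev CFIPair {V : Type*} (G : SimpleGraph V) :=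
  {q : Bool × V × V // G.Adj q.2.1 q.2.2}

/-- Middle vertices `m_A` of the CFI construction: for each vertex `v` and each
even-cardinality subset `A` of the neighbours of `v`. -/
abbrev CFIMid {V : Type*} (G : SimpleGraph V) :=
  {m : V × Set V // m.2 ⊆ G.neighborSet m.1 ∧ Even m.2.ncard}

abbrev CFIVert {V : Type*} (G : SimpleGraph V) := CFIPair G ⊕ CFIMid G

/-- The Cai–Fürer–Immerman graph `CFI_T(G)`: each vertex `v` of `G` is replaced
by the gadget `X_{E(v)}` (middle vertex `m_{(v,A)}` is adjacent to `a(v,w)` for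
`w ∈ A` and to `b(v,w)` for `w ∉ A`), and for each edge `vw ∉ T` the edges
`a(v,w)a(w,v)`, `b(v,w)b(w,v)` are added, while for `vw ∈ T` the twisted edges
`a(v,w)b(w,v)`, `b(v,w)a(w,v)` are added. -/
def CFI {V : Type*} (G : SimpleGraph V) (T : Set (Sym2 V)) : SimpleGraph (CFIVert G) :=
  SimpleGraph.fromRel (fun x y =>
    match x, y with
    | Sum.inr m, Sum.inl p =>
        p.val.2.1 = m.val.1 ∧
        ((p.val.1 = false ∧ p.val.2.2 ∈ m.val.2) ∨ (p.val.1 = true ∧ p.val.2.2 ∉ m.val.2))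
    | Sum.inl p, Sum.inl q =>
        p.val.2.1 = q.val.2.2 ∧ p.val.2.2 = q.val.2.1 ∧
        ((s(p.val.2.1, p.val.2.2) ∉ T ∧ p.val.1 = q.val.1) ∨
         (s(p.val.2.1, p.val.2.2) ∈ T ∧ p.val.1 ≠ q.val.1))
    | _, _ => False)

/-
Number the grid vertices row by row and let vertex `x` own positions `2 x` and `2 x + 1` of an
infinite path. The pair vertices of a directed edge `(x, y)` occupy the path interval
`[2 x + 1, 2 y]` if `x < y` and `[2 x, 2 x + 1]` otherwise, so the ends `(x, y)` and `(y, x)` of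
an edge between gadgets meet at `2 max x y`. Each middle vertex at `x` gets a leaf bag attached at
`2 x + 1`, holding it and the at most `8` pair vertices at `x`. A path bag consists of the forward
edges across one cut of the row-major order (one horizontal edge and at most one vertical edge per
column) and of the at most two backward edges at one vertex: at most `n + 3` directed edges, hence
`2 n + 6` pair vertices.
-/

namespace SimpleGraph

variable {V : Type*} {G : SimpleGraph V}

theorem isBridge_of_boundary {S : Set V} {a b : V} (ha : a ∈ S) (hb : b ∉ S)
    (hS : ∀ x y, G.Adj x y → x ∈ S → y ∉ S → s(x, y) = s(a, b)) :
    G.IsBridge s(a, b) := by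
  rintro ⟨p⟩
  obtain ⟨d, -, hd, hd'⟩ := p.exists_boundary_dart S ha hb
  have hadj := deleteEdges_adj.1 d.adj
  exact hadj.2 (hS _ _ hadj.1 hd hd')

theorem connected_of_descent (r : V) (φ : V → ℕ)
    (h : ∀ x, x ≠ r → ∃ y, G.Adj x y ∧ φ y < φ x) : G.Connected := by
  have reach : ∀ x, G.Reachable x r := by
    intro x
    induction hx : φ x using Nat.strong_induction_on generalizing x with
    | _ k ih =>
      by_cases hxr : x = r
      · exact hxr ▸ Reachable.refl _
      · obtain ⟨y, hxy, hy⟩ := h x hxr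
        exact hxy.reachable.trans (ih _ (hx ▸ hy) y rfl)
  have : Nonempty V := ⟨r⟩
  exact ⟨fun x y => (reach x).trans (reach y).symm⟩

section Caterpillar

variable {L : Type*}

def caterpillar (att : L → ℕ) : SimpleGraph (ℕ ⊕ L) where
  Adj
    | .inl i, .inl j => i + 1 = j ∨ j + 1 = i
    | .inl i, .inr m | .inr m, .inl i => att m = i
    | .inr _, .inr _ => False
  symm := ⟨by rintro (i | m) (j | m') h <;> simp_all only [or_comm]⟩
  loopless := ⟨by rintro (i | m) h; exacts [by simp at h, h]⟩

theorem caterpillar_isTree (att : L → ℕ) : (caterpillar att).IsTree := by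
  refine ⟨connected_of_descent (.inl 0) (Sum.elim id (att · + 1)) ?_,
    isAcyclic_iff_forall_adj_isBridge.2 ?_⟩
  · rintro ((_ | i) | m) h
    · exact absurd rfl h
    · exact ⟨.inl i, Or.inr rfl, by simp⟩
    · exact ⟨.inl (att m), rfl, by simp⟩
  have path_bridge (i : ℕ) : (caterpillar att).IsBridge s(.inl i, .inl (i + 1)) := by
    refine isBridge_of_boundary (S := {x | Sum.elim id att x ≤ i}) (by simp) (by simp) ?_
    rintro (a | m) (b | m') h ha hb <;> simp only [caterpillar, Set.mem_ofPred_eq, Sum.elim_inl,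
      Sum.elim_inr, id] at h ha hb
    · obtain rfl : a = i := by omega
      obtain rfl : b = a + 1 := by omega
      rfl
    all_goals omega
  have leaf_bridge (m : L) : (caterpillar att).IsBridge s(.inl (att m), .inr m) := by
    refine isBridge_of_boundary (S := {.inr m}ᶜ) (by simp) (by simp) ?_
    rintro x y h hx hy
    obtain rfl : y = .inr m := by simpa using hy
    rcases x with i | m'
    · obtain rfl : att m = i := h
      rfl
    · exact h.elim
  rintro (i | m) (j | m') h
  · rcases h with rfl | rfl
    · exact path_bridge i
    · rw [Sym2.eq_swap]; exact path_bridge j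
  · obtain rfl : att m' = i := h
    exact leaf_bridge m'
  · obtain rfl : att m = j := h
    rw [Sym2.eq_swap]; exact leaf_bridge m
  · exact h.elim

end Caterpillar

end SimpleGraph

section Intervals

variable {P M : Type*} (lo hi : P → ℕ) (R : M → P → Prop)

def caterpillarBag : ℕ ⊕ M → Set (P ⊕ M)
  | .inl i => .inl '' {p | i ∈ Set.Icc (lo p) (hi p)}
  | .inr m => insert (.inr m) (.inl '' {p | R m p})

variable {lo hi R}

@[simp] lemma inl_mem_caterpillarBag_inl {p : P} {i : ℕ} :
    (.inl p : P ⊕ M) ∈ caterpillarBag lo hi R (.inl i) ↔ i ∈ Set.Icc (lo p) (hi p) := by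
  simp [caterpillarBag]

@[simp] lemma inl_mem_caterpillarBag_inr {p : P} {m : M} :
    (.inl p : P ⊕ M) ∈ caterpillarBag lo hi R (.inr m) ↔ R m p := by
  simp [caterpillarBag]

@[simp] lemma inr_notMem_caterpillarBag_inl {m : M} {i : ℕ} :
    (.inr m : P ⊕ M) ∉ caterpillarBag lo hi R (.inl i) := by
  simp [caterpillarBag]

@[simp] lemma inr_mem_caterpillarBag_inr {m m' : M} :
    (.inr m : P ⊕ M) ∈ caterpillarBag lo hi R (.inr m') ↔ m = m' := by
  simp [caterpillarBag]

lemma ncard_caterpillarBag_inl (i : ℕ) :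
    (caterpillarBag lo hi R (.inl i)).ncard = {p | i ∈ Set.Icc (lo p) (hi p)}.ncard :=
  Set.ncard_image_of_injective _ Sum.inl_injective

lemma ncard_caterpillarBag_inr_le (m : M) :
    (caterpillarBag lo hi R (.inr m)).ncard ≤ {p | R m p}.ncard + 1 :=
  (Set.ncard_insert_le _ _).trans_eq (by rw [Set.ncard_image_of_injective _ Sum.inl_injective])

lemma caterpillarBag_connected (att : M → ℕ) (hlo : ∀ p, lo p ≤ hi p)
    (hR : ∀ m p, R m p → att m ∈ Set.Icc (lo p) (hi p)) (v : P ⊕ M) :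
    ((caterpillar att).induce {i | v ∈ caterpillarBag lo hi R i}).Connected := by
  rcases v with p | m
  · refine connected_of_descent ⟨.inl (lo p), by simp [hlo]⟩
      (Sum.elim id (att · + 1) ∘ Subtype.val) ?_
    rintro ⟨i | m, hx⟩ hne
    · have : lo p ≠ i := fun h => hne (by subst h; rfl)
      simp only [Set.mem_ofPred_eq, inl_mem_caterpillarBag_inl, Set.mem_Icc] at hx
      exact ⟨⟨.inl (i - 1), by simp; omega⟩, show i + 1 = i - 1 ∨ i - 1 + 1 = i by omega,
        by simp; omega⟩
    · exact ⟨⟨.inl (att m), by simpa using hR m p (by simpa using hx)⟩, rfl, by simp⟩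
  · refine connected_of_descent ⟨.inr m, by simp⟩ (fun _ => 0) ?_
    rintro ⟨i | m', hx⟩ hne
    · simp at hx
    · obtain rfl : m = m' := by simpa using hx
      exact absurd rfl hne

def TreeDecomp.ofIntervals (H : SimpleGraph (P ⊕ M)) (att : M → ℕ)
    (hlo : ∀ p, lo p ≤ hi p) (hR : ∀ m p, R m p → att m ∈ Set.Icc (lo p) (hi p))
    (hPP : ∀ p q, H.Adj (.inl p) (.inl q) →
      (Set.Icc (lo p) (hi p) ∩ Set.Icc (lo q) (hi q)).Nonempty)
    (hMP : ∀ m p, H.Adj (.inr m) (.inl p) → R m p)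
    (hMM : ∀ m m', ¬ H.Adj (.inr m) (.inr m')) :
    TreeDecomp H (ℕ ⊕ M) where
  T := caterpillar att
  tree := caterpillar_isTree att
  bag := caterpillarBag lo hi R
  bags_connected := caterpillarBag_connected att hlo hR
  edge_subset := by
    rintro (p | m) (q | m') h
    · obtain ⟨i, hp, hq⟩ := hPP p q h
      exact ⟨.inl i, by simpa using hp, by simpa using hq⟩
    · exact ⟨.inr m', by simpa using hMP m' p h.symm, by simp⟩
    · exact ⟨.inr m, by simp, by simpa using hMP m q h⟩
    · exact (hMM m m' h).elim

end Intervals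

section CFI

variable {V : Type*} {G : SimpleGraph V} {T : Set (Sym2 V)}

abbrev CFIPair.src (p : CFIPair G) : V := p.1.2.1

abbrev CFIPair.dst (p : CFIPair G) : V := p.1.2.2

lemma CFIPair.adj (p : CFIPair G) : G.Adj p.src p.dst := p.2

lemma CFI_adj_inl_inl {p q : CFIPair G} (h : (CFI G T).Adj (.inl p) (.inl q)) :
    p.src = q.dst ∧ p.dst = q.src := by
  rcases (fromRel_adj _ _ _).1 h with ⟨-, ⟨h1, h2, -⟩ | ⟨h1, h2, -⟩⟩
  exacts [⟨h1, h2⟩, ⟨h2.symm, h1.symm⟩]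

lemma CFI_adj_inr_inl {m : CFIMid G} {p : CFIPair G} (h : (CFI G T).Adj (.inr m) (.inl p)) :
    p.src = m.1.1 := by
  rcases (fromRel_adj _ _ _).1 h with ⟨-, ⟨h, -⟩ | h⟩
  exacts [h, h.elim]

lemma CFI_not_adj_inr_inr (m m' : CFIMid G) : ¬ (CFI G T).Adj (.inr m) (.inr m') := by
  rintro h
  rcases (fromRel_adj _ _ _).1 h with ⟨-, h | h⟩ <;> exact h

lemma ncard_pairs_le_two_mul_card {f : V → ℕ} (hf : Function.Injective f)
    {S : Set (CFIPair G)} {F : Finset (ℕ × ℕ)} (hS : ∀ p ∈ S, (f p.src, f p.dst) ∈ F) :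
    S.ncard ≤ 2 * F.card := by
  calc S.ncard ≤ (↑(Finset.univ ×ˢ F : Finset (Bool × ℕ × ℕ)) : Set (Bool × ℕ × ℕ)).ncard := by
        refine Set.ncard_le_ncard_of_injOn (fun p => (p.1.1, f p.src, f p.dst))
          (fun p hp => by simpa using hS p hp) ?_
        intro p _ q _ h
        simp only [Prod.mk.injEq] at h
        exact Subtype.ext (Prod.ext h.1 (Prod.ext (hf h.2.1) (hf h.2.2)))
    _ = 2 * F.card := by simp [Set.ncard_coe_finset]

end CFI

section Grid

variable {n : ℕ}

def gridIndex (v : Fin n × Fin n) : ℕ := finProdFinEquiv v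

lemma gridIndex_injective : Function.Injective (gridIndex (n := n)) :=
  Fin.val_injective.comp finProdFinEquiv.injective

lemma gridIndex_of_adj {x y : Fin n × Fin n} (h : (grid n).Adj x y) :
    gridIndex y = gridIndex x + 1 ∨ gridIndex y = gridIndex x + n ∨
      gridIndex x = gridIndex y + 1 ∨ gridIndex x = gridIndex y + n := by
  have step : ∀ a b : Fin n × Fin n, (a.1 = b.1 ∧ a.2.val + 1 = b.2.val) ∨
      (a.2 = b.2 ∧ a.1.val + 1 = b.1.val) →
      gridIndex b = gridIndex a + 1 ∨ gridIndex b = gridIndex a + n := by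
    rintro a b (⟨h1, h2⟩ | ⟨h1, h2⟩) <;> simp only [gridIndex, finProdFinEquiv_apply_val]
    · left; rw [h1, ← h2]; ring
    · right; rw [h1, ← h2]; ring
  rcases (fromRel_adj _ _ _).1 h with ⟨-, h | h⟩
  · have := step x y h; omega
  · have := step y x h; omega

def pairLo (p : CFIPair (grid n)) : ℕ :=
  if gridIndex p.src < gridIndex p.dst then 2 * gridIndex p.src + 1 else 2 * gridIndex p.src

def pairHi (p : CFIPair (grid n)) : ℕ :=
  if gridIndex p.src < gridIndex p.dst then 2 * gridIndex p.dst else 2 * gridIndex p.src + 1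

lemma pairLo_le_pairHi (p : CFIPair (grid n)) : pairLo p ≤ pairHi p := by
  unfold pairLo pairHi; split_ifs <;> omega

lemma mem_Icc_pairLo_pairHi (p : CFIPair (grid n)) :
    2 * gridIndex p.src + 1 ∈ Set.Icc (pairLo p) (pairHi p) := by
  unfold pairLo pairHi; split_ifs <;> constructor <;> omega

lemma Icc_pairLo_pairHi_inter_nonempty {p q : CFIPair (grid n)} (h1 : p.src = q.dst)
    (h2 : p.dst = q.src) :
    (Set.Icc (pairLo p) (pairHi p) ∩ Set.Icc (pairLo q) (pairHi q)).Nonempty := by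
  have hne : gridIndex p.src ≠ gridIndex p.dst := gridIndex_injective.ne p.adj.ne
  refine ⟨2 * max (gridIndex p.src) (gridIndex p.dst), ?_⟩
  simp only [pairLo, pairHi, ← h1, ← h2, Set.mem_inter_iff, Set.mem_Icc]
  split_ifs <;> omega

lemma ncard_pairs_at_le (i : ℕ) :
    {p : CFIPair (grid n) | i ∈ Set.Icc (pairLo p) (pairHi p)}.ncard ≤ 2 * n + 6 := by
  set s := (i + 1) / 2
  set t := i / 2
  -- the horizontal and the vertical edges crossing the cut before `s`, the backward edges at `t`
  let F : Finset (ℕ × ℕ) := insert (s - 1, s) (insert (t, t - 1) (insert (t, t - n)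
    ((Finset.Ico (s - n) s).image fun u => (u, u + n))))
  have hF : F.card ≤ n + 3 := by
    grw [Finset.card_insert_le, Finset.card_insert_le, Finset.card_insert_le, Finset.card_image_le,
      Nat.card_Ico]
    omega
  refine (ncard_pairs_le_two_mul_card gridIndex_injective ?_).trans (show 2 * F.card ≤ _ by omega)
  rintro p hp
  simp only [Set.mem_ofPred_eq, Set.mem_Icc, pairLo, pairHi] at hp
  simp only [F, Finset.mem_insert, Finset.mem_image, Finset.mem_Ico, Prod.mk.injEq]
  rcases gridIndex_of_adj p.adj with h | h | h | h <;> split_ifs at hp <;>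
    first | omega | exact .inr (.inr (.inr ⟨_, ⟨by omega, by omega⟩, rfl, h.symm⟩))

lemma ncard_pairs_from_le (v : Fin n × Fin n) :
    {p : CFIPair (grid n) | p.src = v}.ncard ≤ 8 := by
  set u := gridIndex v
  let F : Finset (ℕ × ℕ) := {(u, u + 1), (u, u + n), (u, u - 1), (u, u - n)}
  have hF : F.card ≤ 4 := Finset.card_le_four
  refine (ncard_pairs_le_two_mul_card gridIndex_injective (F := F) ?_).trans (by omega)
  rintro p rfl
  simp only [F, Finset.mem_insert, Finset.mem_singleton, Prod.mk.injEq]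
  rcases gridIndex_of_adj p.adj with h | h | h | h <;> omega

def gridCFIDecomp (n : ℕ) (T : Set (Sym2 (Fin n × Fin n))) :
    TreeDecomp (CFI (grid n) T) (ℕ ⊕ CFIMid (grid n)) :=
  TreeDecomp.ofIntervals (R := fun m p => p.src = m.1.1) _ (fun m => 2 * gridIndex m.1.1 + 1)
    pairLo_le_pairHi (fun _ p h => h ▸ mem_Icc_pairLo_pairHi p)
    (fun _ _ h => Icc_pairLo_pairHi_inter_nonempty (CFI_adj_inl_inl h).1 (CFI_adj_inl_inl h).2)
    (fun _ _ h => CFI_adj_inr_inl h) CFI_not_adj_inr_inr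

lemma ncard_gridCFIDecomp_bag_le (hn : 2 ≤ n) (T : Set (Sym2 (Fin n × Fin n)))
    (i : ℕ ⊕ CFIMid (grid n)) : ((gridCFIDecomp n T).bag i).ncard ≤ 2 * n + 6 := by
  rcases i with i | m
  · exact (ncard_caterpillarBag_inl (R := fun m p => p.src = m.1.1) i).trans_le
      (ncard_pairs_at_le i)
  · have hbag := ncard_caterpillarBag_inr_le (lo := pairLo) (hi := pairHi)
      (R := fun m p => p.src = m.1.1) m
    have hpairs := ncard_pairs_from_le m.1.1
    exact hbag.trans (by omega)

end Grid

theorem stmt15 (n : ℕ) (hn : 2 ≤ n) :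
    (∃ (ι : Type) (td : TreeDecomp (CFI (grid n) ∅) ι),
      ∀ i, (td.bag i).ncard ≤ 2 * n + 6) ∧
    ∀ e ∈ (grid n).edgeSet,
      ∃ (ι : Type) (td : TreeDecomp (CFI (grid n) {e}) ι),
        ∀ i, (td.bag i).ncard ≤ 2 * n + 6 :=
  ⟨⟨_, gridCFIDecomp n ∅, ncard_gridCFIDecomp_bag_le hn ∅⟩,
    fun e _ => ⟨_, gridCFIDecomp n {e}, ncard_gridCFIDecomp_bag_le hn {e}⟩⟩
end

section
/- Let G be a finite connected bipartite graph with parts U,V and 2-separator {w1,w2} with w1 ∈ U, w2 ∈ V and w1w2 ∈ E(G). Let C be a component of G − {w1,w2} in which every vertex is at distance at most 2 from both w1 and w2. If all vertices of U have the same degree r, and some vertex v ∈ C ∩ U has all its neighbors in (C ∩ V) ∪ {w2}, while w1 is adjacent to all of C ∩ V, to w2, and to at least one vertex outside C ∪ {w1,w2}, then we get the contradiction r ≥ |C ∩ V| + 2 and r ≤ |C ∩ V| + 1; hence no such configuration exists. -/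
open SimpleGraph
open scoped Classical

theorem stmt19 {X : Type*} [Fintype X] (G : SimpleGraph X) (hconn : G.Connected)
    (U W : Set X) (hUW : U ∪ W = Set.univ) (hdisj : Disjoint U W)
    (hbip : ∀ a b, G.Adj a b → (a ∈ U ∧ b ∈ W) ∨ (a ∈ W ∧ b ∈ U))
    (r : ℕ)
    (w1 w2 : X) (hw1U : w1 ∈ U) (hw2W : w2 ∈ W) (hne : w1 ≠ w2)
    (hsep : ¬ (G.induce {x | x ≠ w1 ∧ x ≠ w2}).Connected)
    (hadj : G.Adj w1 w2)
    (C : Set X) (hCne : C.Nonempty) (hw1C : w1 ∉ C) (hw2C : w2 ∉ C)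
    (hCconn : (G.induce C).Connected)
    (hCclosed : ∀ x ∈ C, ∀ y, G.Adj x y → y ∈ C ∨ y = w1 ∨ y = w2)
    (hCdist : ∀ x ∈ C, G.dist x w1 ≤ 2 ∧ G.dist x w2 ≤ 2)
    (hUdeg : ∀ u ∈ U, (G.neighborSet u).ncard = r)
    (v : X) (hvC : v ∈ C) (hvU : v ∈ U)
    (hvnbrs : ∀ y, G.Adj v y → (y ∈ C ∩ W) ∨ y = w2)
    (hw1all : ∀ y ∈ C ∩ W, G.Adj w1 y)
    (hw1out : ∃ z, G.Adj w1 z ∧ z ∉ C ∧ z ≠ w1 ∧ z ≠ w2) :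
    False := by
  obtain ⟨z, hz1, hzC, hzw1, hzw2⟩ := hw1out
  have hsub : G.neighborSet v ⊆ (C ∩ W) ∪ {w2} := by
    intro y hy
    rcases hvnbrs y hy with h | h
    · exact Or.inl h
    · exact Or.inr h
  have hub : r ≤ (C ∩ W).ncard + 1 := by
    calc r = (G.neighborSet v).ncard := (hUdeg v hvU).symm
    _ ≤ ((C ∩ W) ∪ {w2}).ncard := Set.ncard_le_ncard hsub (Set.toFinite _)
    _ ≤ (C ∩ W).ncard + ({w2} : Set X).ncard := Set.ncard_union_le _ _
    _ = (C ∩ W).ncard + 1 := by rw [Set.ncard_singleton]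
  have hsub2 : (C ∩ W) ∪ {w2, z} ⊆ G.neighborSet w1 := by
    intro y hy
    rcases hy with hy | hy
    · exact hw1all y hy
    · rcases hy with rfl | rfl
      · exact hadj
      · exact hz1
  have hdisj2 : Disjoint (C ∩ W) ({w2, z} : Set X) := by
    rw [Set.disjoint_right]
    rintro y (rfl | rfl)
    · exact fun h => hw2C h.1
    · exact fun h => hzC h.1
  have hcard2 : ({w2, z} : Set X).ncard = 2 := Set.ncard_pair hzw2.symm
  have hlb : (C ∩ W).ncard + 2 ≤ r := by
    calc (C ∩ W).ncard + 2
        = ((C ∩ W) ∪ {w2, z}).ncard := by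
          rw [Set.ncard_union_eq hdisj2 (Set.toFinite _) (Set.toFinite _), hcard2]
      _ ≤ (G.neighborSet w1).ncard := Set.ncard_le_ncard hsub2 (Set.toFinite _)
      _ = r := hUdeg w1 hw1U
  omega
end
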